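/- arXiv:1402.4867 — 4 statements merged into one kernel-verified Lean document; each statement's English description precedes it below -/
import Mathlib

section
/- Let π be a permutation of {1,…,n} and let d : {1,…,n} → ℤ satisfy ∑_{i=1}^n d(i) = 0 and π(i) + d(i) ≡ i (mod n) for every i. Then there exists a finite sequence of cyclically adjacent swaps that sorts π and whose net clockwise displacement vector equals d. -/
/-- Applying the swap `q = (i, j)` to `π`: elements `i` and `j` exchange positions
(element `i` moves clockwise, element `j` moves counterclockwise). -/
def applySwap {n : ℕ} (π : Equiv.Perm (Fin n)) (q : Fin n × Fin n) : Equiv.Perm (Fin n) :=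
  π.trans (Equiv.swap (π q.1) (π q.2))

/-- `q = (i, j)` is a cyclically adjacent swap for `π`: element `j` occupies the
position cyclically following the position of element `i` (positions mod `n`). -/
def IsCycSwap {n : ℕ} [NeZero n] (π : Equiv.Perm (Fin n)) (q : Fin n × Fin n) : Prop :=
  π q.2 = π q.1 + 1

/-- `Q` is a valid sequence of cyclically adjacent swaps for `π`: each swap is a
cyclically adjacent swap for the permutation obtained by performing the previous swaps. -/
def IsSwapSeq {n : ℕ} [NeZero n] : Equiv.Perm (Fin n) → List (Fin n × Fin n) → Prop
  | _, [] => True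
  | π, q :: Q => IsCycSwap π q ∧ IsSwapSeq (applySwap π q) Q

/-- The permutation resulting from applying the swaps of `Q` in order to `π`. -/
def applySwaps {n : ℕ} (π : Equiv.Perm (Fin n)) (Q : List (Fin n × Fin n)) :
    Equiv.Perm (Fin n) :=
  Q.foldl applySwap π

/-- `c(i,j)`: the number of times the swap `(i,j)` occurs in `Q` minus the number of
times the swap `(j,i)` occurs in `Q`. -/
def swapCount {n : ℕ} (Q : List (Fin n × Fin n)) (i j : Fin n) : ℤ :=
  (Q.count (i, j) : ℤ) - (Q.count (j, i) : ℤ)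

/-- `d(i) = ∑_{j ≠ i} c(i,j)`: the net clockwise displacement of element `i`. -/
def netDisp {n : ℕ} (Q : List (Fin n × Fin n)) (i : Fin n) : ℤ :=
  ∑ j ∈ Finset.univ.erase i, swapCount Q i j

/-!
Along any valid swap sequence, the position of each element changes by its net displacement
modulo `n`. Hence, for any sorting sequence `Q₀` (adjacent transpositions generate the symmetric
group), the correction `d - netDisp Q₀` is divisible by `n` and sums to zero; write it as `n • v`.

If an element makes `n - 1` clockwise swaps in a row, it passes every other element once: each
position drops by one and the displacement vector is `n • δₖ - 1`. Doing this `v k + t` times for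
every element `k`, with `t` large enough to make these counts nonnegative, takes `n t` such turns,
so the arrangement returns to where it started, and the displacement is `n • v`. Appending this
closed sequence to `Q₀` gives the result.
-/

open Equiv

section

variable {n : ℕ}

theorem applySwaps_append (π : Perm (Fin n)) (Q₁ Q₂ : List (Fin n × Fin n)) :
    applySwaps π (Q₁ ++ Q₂) = applySwaps (applySwaps π Q₁) Q₂ :=
  List.foldl_append

theorem applySwap_eq_swap_mul (π : Perm (Fin n)) (q : Fin n × Fin n) :
    applySwap π q = swap (π q.1) (π q.2) * π := rfl

theorem netDisp_eq_sum (Q : List (Fin n × Fin n)) (i : Fin n) :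
    netDisp Q i = ∑ j, swapCount Q i j :=
  Finset.sum_erase _ (sub_self _)

theorem netDisp_append (Q₁ Q₂ : List (Fin n × Fin n)) (i : Fin n) :
    netDisp (Q₁ ++ Q₂) i = netDisp Q₁ i + netDisp Q₂ i := by
  simp only [netDisp_eq_sum, swapCount, List.count_append, ← Finset.sum_add_distrib]
  push_cast
  exact Finset.sum_congr rfl fun _ _ => by ring

@[simp] theorem netDisp_nil (i : Fin n) : netDisp [] i = 0 := by
  simp [netDisp, swapCount]

theorem netDisp_singleton (a b i : Fin n) :
    netDisp [(a, b)] i = (if i = a then 1 else 0) - (if i = b then 1 else 0) := by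
  simp only [netDisp_eq_sum, swapCount, List.count_singleton, beq_iff_eq, Prod.ext_iff,
    Finset.sum_sub_distrib]
  simp [ite_and, eq_comm (a := a), eq_comm (a := b)]

theorem sum_netDisp (Q : List (Fin n × Fin n)) : ∑ i, netDisp Q i = 0 := by
  simp only [netDisp_eq_sum, swapCount, Finset.sum_sub_distrib]
  rw [Finset.sum_comm, sub_self]

variable [NeZero n]

theorem IsSwapSeq.append {π : Perm (Fin n)} {Q₁ Q₂ : List (Fin n × Fin n)}
    (h₁ : IsSwapSeq π Q₁) (h₂ : IsSwapSeq (applySwaps π Q₁) Q₂) : IsSwapSeq π (Q₁ ++ Q₂) := by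
  induction Q₁ generalizing π with
  | nil => exact h₂
  | cons q Q ih => exact ⟨h₁.1, ih h₁.2 h₂⟩

theorem val_add_one_modEq (x : Fin n) : ((x + 1 : Fin n) : ℤ) ≡ x + 1 [ZMOD n] := by
  rw [Fin.val_add, Fin.val_one']
  push_cast
  exact (Int.mod_modEq _ _).trans ((Int.mod_modEq _ _).add_left _)

theorem IsCycSwap.val_applySwap_modEq {π : Perm (Fin n)} {a b : Fin n} (h : IsCycSwap π (a, b))
    (i : Fin n) : (applySwap π (a, b) i : ℤ) ≡ π i + netDisp [(a, b)] i [ZMOD n] := by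
  have h : π b = π a + 1 := h
  rw [netDisp_singleton, applySwap_eq_swap_mul, Perm.mul_apply]
  obtain rfl | hab := eq_or_ne a b
  · simp
  by_cases hia : i = a
  · subst hia
    simpa [hab, h] using val_add_one_modEq (π i)
  by_cases hib : i = b
  · subst hib
    simpa [hia, h, sub_eq_add_neg] using ((val_add_one_modEq (π a)).sub_right 1).symm
  · simp [hia, hib, swap_apply_of_ne_of_ne, π.injective.ne hia, π.injective.ne hib]

theorem IsSwapSeq.val_applySwaps_modEq {π : Perm (Fin n)} {Q : List (Fin n × Fin n)}
    (hQ : IsSwapSeq π Q) (i : Fin n) : (applySwaps π Q i : ℤ) ≡ π i + netDisp Q i [ZMOD n] := by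
  induction Q generalizing π with
  | nil => simp [applySwaps]
  | cons q Q ih =>
    obtain ⟨a, b⟩ := q
    rw [← List.singleton_append, netDisp_append, ← add_assoc, List.singleton_append]
    exact (ih hQ.2).trans ((IsCycSwap.val_applySwap_modEq hQ.1 i).add_right _)

theorem exists_isSwapSeq_applySwaps_eq_mul (σ π : Perm (Fin n)) :
    ∃ Q, IsSwapSeq π Q ∧ applySwaps π Q = σ * π := by
  obtain ⟨m, rfl⟩ := Nat.exists_eq_succ_of_ne_zero (NeZero.ne n)
  induction σ using Submonoid.induction_of_closure_eq_top_right
    (Perm.mclosure_swap_castSucc_succ m) generalizing π with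
  | one => exact ⟨[], trivial, (one_mul π).symm⟩
  | mul_right σ τ hτ ih =>
    obtain ⟨i, rfl⟩ := hτ
    obtain ⟨Q, hQ, hQπ⟩ := ih (swap i.castSucc i.succ * π)
    refine ⟨(π.symm i.castSucc, π.symm i.succ) :: Q, ⟨?_, ?_⟩, ?_⟩
    · simp [IsCycSwap, Fin.coeSucc_eq_succ]
    · simpa [applySwap_eq_swap_mul] using hQ
    · simpa [applySwaps, applySwap_eq_swap_mul, mul_assoc] using hQπ

theorem exists_isSwapSeq_applySwaps_eq_one (π : Perm (Fin n)) :
    ∃ Q, IsSwapSeq π Q ∧ applySwaps π Q = 1 := by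
  simpa using exists_isSwapSeq_applySwaps_eq_mul π⁻¹ π

def clockwiseWalk : ℕ → Perm (Fin n) → Fin n → List (Fin n × Fin n)
  | 0, _, _ => []
  | m + 1, π, k => (k, π.symm (π k + 1)) :: clockwiseWalk m (applySwap π (k, π.symm (π k + 1))) k

theorem isSwapSeq_clockwiseWalk :
    ∀ (m : ℕ) (π : Perm (Fin n)) (k : Fin n), IsSwapSeq π (clockwiseWalk m π k)
  | 0, _, _ => trivial
  | m + 1, π, k => ⟨by simp [IsCycSwap], isSwapSeq_clockwiseWalk m _ k⟩

/-- `(π x - π k).val` is the clockwise distance from `k` to `x`: the walk passes the elements at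
distance `1, …, m`. -/
theorem netDisp_clockwiseWalk {m : ℕ} (hm : m < n) (π : Perm (Fin n)) (k x : Fin n) :
    netDisp (clockwiseWalk m π k) x =
      if x = k then (m : ℤ) else if (π x - π k).val ≤ m then -1 else 0 := by
  induction m generalizing π with
  | zero =>
    have : x ≠ k → (π x - π k).val ≠ 0 := fun hxk h =>
      hxk (π.injective (sub_eq_zero.1 (Fin.val_eq_zero_iff.1 h)))
    split_ifs <;> simp_all [clockwiseWalk]
  | succ m ih =>
    have h1 : (1 : Fin n).val = 1 := by rw [Fin.val_one', Nat.mod_eq_of_lt (by omega)]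
    set b := π.symm (π k + 1)
    have hb : π b = π k + 1 := π.apply_symm_apply _
    have hbk : b ≠ k := fun h => by
      rw [h, left_eq_add, Fin.ext_iff, h1] at hb
      exact one_ne_zero hb
    rw [clockwiseWalk, ← List.singleton_append, netDisp_append, netDisp_singleton, ih (by omega)]
    simp only [applySwap_eq_swap_mul, Perm.mul_apply, swap_apply_left]
    by_cases hxk : x = k
    · subst hxk
      rw [if_pos rfl, if_neg hbk.symm, if_pos rfl, if_pos rfl]
      push_cast
      ring
    by_cases hxb : x = b
    · subst hxb
      rw [swap_apply_right, hb, sub_add_cancel_left, Fin.val_neg', add_sub_cancel_left, h1,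
        Nat.mod_eq_of_lt (by omega)]
      simp [hxk]
      omega
    · have hne : π x - π k ≠ 0 := sub_ne_zero.2 (π.injective.ne hxk)
      have hpos : (π x - π k).val ≠ 0 := Fin.val_ne_zero_iff.2 hne
      rw [swap_apply_of_ne_of_ne (π.injective.ne hxk) (π.injective.ne hxb), hb,
        sub_add_eq_sub_sub, Fin.val_sub_one_of_ne_zero hne, if_neg hxk, if_neg hxb, if_neg hxk,
        if_neg hxk]
      split_ifs <;> omega

theorem netDisp_clockwiseWalk_sub_one (π : Perm (Fin n)) (k x : Fin n) :
    netDisp (clockwiseWalk (n - 1) π k) x = n * (if x = k then 1 else 0) - 1 := by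
  rw [netDisp_clockwiseWalk (Nat.sub_lt (Nat.pos_of_neZero n) one_pos)]
  split_ifs with hxk h
  · push_cast [Nat.one_le_iff_ne_zero.2 (NeZero.ne n)]
    ring
  · simp
  · exact absurd (Nat.le_sub_one_of_lt (π x - π k).isLt) h

def fullTurns : Perm (Fin n) → List (Fin n) → List (Fin n × Fin n)
  | _, [] => []
  | π, k :: ks =>
    clockwiseWalk (n - 1) π k ++ fullTurns (applySwaps π (clockwiseWalk (n - 1) π k)) ks

theorem isSwapSeq_fullTurns :
    ∀ (π : Perm (Fin n)) (ks : List (Fin n)), IsSwapSeq π (fullTurns π ks)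
  | _, [] => trivial
  | π, k :: ks => (isSwapSeq_clockwiseWalk _ π k).append (isSwapSeq_fullTurns _ ks)

theorem netDisp_fullTurns (π : Perm (Fin n)) (ks : List (Fin n)) (x : Fin n) :
    netDisp (fullTurns π ks) x = n * ks.count x - ks.length := by
  induction ks generalizing π with
  | nil => simp [fullTurns]
  | cons k ks ih =>
    rw [fullTurns, netDisp_append, netDisp_clockwiseWalk_sub_one, ih, List.count_cons,
      List.length_cons]
    simp only [beq_iff_eq, eq_comm (a := k)]
    push_cast
    ring

theorem IsSwapSeq.applySwaps_eq_self_of_dvd {π : Perm (Fin n)} {Q : List (Fin n × Fin n)}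
    (hQ : IsSwapSeq π Q) (h : ∀ i, (n : ℤ) ∣ netDisp Q i) : applySwaps π Q = π := by
  ext i
  have := (hQ.val_applySwaps_modEq i).trans ((Int.modEq_zero_iff_dvd.2 (h i)).add_left _)
  rw [add_zero] at this
  exact (Int.natCast_modEq_iff.1 this).eq_of_lt_of_lt (Fin.isLt _) (Fin.isLt _)

theorem exists_isSwapSeq_applySwaps_eq_self (π : Perm (Fin n)) (e : Fin n → ℤ)
    (hdvd : ∀ i, (n : ℤ) ∣ e i) (hsum : ∑ i, e i = 0) :
    ∃ Q, IsSwapSeq π Q ∧ applySwaps π Q = π ∧ ∀ i, netDisp Q i = e i := by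
  choose v hv using hdvd
  have hv₀ : ∑ i, v i = 0 := by
    have : (n : ℤ) * ∑ i, v i = 0 := by simpa only [Finset.mul_sum, ← hv] using hsum
    exact (mul_eq_zero.1 this).resolve_left (Nat.cast_ne_zero.2 (NeZero.ne n))
  set t : ℤ := ∑ i, |v i|
  have hvt : ∀ i, 0 ≤ v i + t := fun i => by
    have := Finset.single_le_sum (fun j _ => abs_nonneg (v j)) (Finset.mem_univ i)
    linarith [neg_abs_le (v i)]
  set ks := (∑ i, Multiset.replicate (v i + t).toNat i).toList
  have hcount : ∀ x, (ks.count x : ℤ) = v x + t := fun x => by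
    rw [← Multiset.coe_count, Multiset.coe_toList, Multiset.count_sum']
    simp [Multiset.count_replicate, hvt]
  have hlen : (ks.length : ℤ) = n * t := by
    rw [Multiset.length_toList, Multiset.card_sum]
    simp [hvt, Finset.sum_add_distrib, hv₀]
  have hdisp : ∀ x, netDisp (fullTurns π ks) x = e x := fun x => by
    rw [netDisp_fullTurns, hcount, hlen, hv]
    ring
  have hQ := isSwapSeq_fullTurns π ks
  exact ⟨_, hQ, hQ.applySwaps_eq_self_of_dvd fun x => hdisp x ▸ ⟨v x, hv x⟩, hdisp⟩

end

/-- Given a displacement vector `d` satisfying the feasibility conditions for `π`,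
there is a sequence of cyclically adjacent swaps sorting `π` whose net clockwise
displacement vector equals `d`. -/
theorem exists_sorting_seq_of_feasible (n : ℕ) [NeZero n] (π : Equiv.Perm (Fin n))
    (d : Fin n → ℤ) (hsum : ∑ i, d i = 0)
    (hcong : ∀ i : Fin n, ((π i : ℕ) : ℤ) + d i ≡ ((i : ℕ) : ℤ) [ZMOD (n : ℤ)]) :
    ∃ Q : List (Fin n × Fin n), IsSwapSeq π Q ∧ applySwaps π Q = 1 ∧
      ∀ i, netDisp Q i = d i := by
  obtain ⟨Q₀, hQ₀, hQ₀π⟩ := exists_isSwapSeq_applySwaps_eq_one π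
  have hdvd : ∀ i, (n : ℤ) ∣ d i - netDisp Q₀ i := fun i => by
    have h₀ := hQ₀.val_applySwaps_modEq i
    rw [hQ₀π, Perm.one_apply] at h₀
    exact (((hcong i).trans h₀).add_left_cancel' _).symm.dvd
  have hsum' : ∑ i, (d i - netDisp Q₀ i) = 0 := by
    rw [Finset.sum_sub_distrib, hsum, sum_netDisp, sub_zero]
  obtain ⟨Q₁, hQ₁, hQ₁π, hQ₁d⟩ := exists_isSwapSeq_applySwaps_eq_self 1 _ hdvd hsum'
  refine ⟨Q₀ ++ Q₁, hQ₀.append (hQ₀π ▸ hQ₁), by rw [applySwaps_append, hQ₀π, hQ₁π], fun i => ?_⟩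
  rw [netDisp_append, hQ₁d]
  ring
end

section
/- Let π be a permutation of {1,…,n} and let d : {1,…,n} → ℤ satisfy ∑_{i=1}^n d(i) = 0 and π(i) + d(i) ≡ i (mod n) for every i. If d is not identically zero, then there exist elements i, j occupying cyclically adjacent positions (i.e., π(j) ≡ π(i) + 1 (mod n)) with d(i) > d(j). -/
/-! A displacement vector with no adjacent descent is monotone along the cyclic order of
positions; going once around the cycle forces it to be constant, and a constant vector with
zero sum vanishes. -/

namespace Fin

variable {n : ℕ} [NeZero n] {α : Type*}

open Fin.NatCast in
theorem le_apply_add_natCast [Preorder α] {f : Fin n → α} (hf : ∀ p, f p ≤ f (p + 1))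
    (p : Fin n) (k : ℕ) : f p ≤ f (p + k) := by
  induction k with
  | zero => simp
  | succ k ih => exact (ih.trans (hf _)).trans_eq (by rw [Nat.cast_succ, add_assoc])

theorem le_apply_of_le_apply_add_one [Preorder α] {f : Fin n → α}
    (hf : ∀ p, f p ≤ f (p + 1)) (p q : Fin n) : f p ≤ f q := by
  simpa [Fin.cast_val_eq_self] using le_apply_add_natCast hf p (q - p).val

theorem apply_eq_of_le_apply_add_one [PartialOrder α] {f : Fin n → α}
    (hf : ∀ p, f p ≤ f (p + 1)) (p q : Fin n) : f p = f q :=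
  (le_apply_of_le_apply_add_one hf p q).antisymm (le_apply_of_le_apply_add_one hf q p)

end Fin

theorem Finset.eq_zero_of_sum_eq_zero_of_forall_eq {ι M : Type*} [Fintype ι] [AddCommMonoid M]
    [IsAddTorsionFree M] {f : ι → M} (hsum : ∑ i, f i = 0) (hf : ∀ i j, f i = f j) (i : ι) :
    f i = 0 := by
  rw [Finset.sum_congr rfl fun j _ => hf j i, Finset.sum_const] at hsum
  exact (smul_eq_zero.mp hsum).resolve_left (Finset.card_ne_zero_of_mem (Finset.mem_univ i))

theorem exists_adjacent_descent_general (n : ℕ) [NeZero n] (π : Equiv.Perm (Fin n))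
    (d : Fin n → ℤ) (hsum : ∑ i, d i = 0)
    (hd : d ≠ 0) :
    ∃ i j : Fin n, π j = π i + 1 ∧ d j < d i := by
  by_contra! hmono
  have step : ∀ p, d (π.symm p) ≤ d (π.symm (p + 1)) := fun p => hmono _ _ (by simp)
  have hconst : ∀ i j, d i = d j := fun i j => by
    simpa using Fin.apply_eq_of_le_apply_add_one step (π i) (π j)
  exact hd (funext (Finset.eq_zero_of_sum_eq_zero_of_forall_eq hsum hconst))

/-- If a feasible displacement vector `d` is not identically zero, then some pair of
elements in cyclically adjacent positions has `d(i) > d(j)` (with `j` occupying the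
position cyclically after `i`). -/
theorem exists_adjacent_descent (n : ℕ) [NeZero n] (π : Equiv.Perm (Fin n))
    (d : Fin n → ℤ) (hsum : ∑ i, d i = 0)
    (hcong : ∀ i : Fin n, ((π i : ℕ) : ℤ) + d i ≡ ((i : ℕ) : ℤ) [ZMOD (n : ℤ)])
    (hd : d ≠ 0) :
    ∃ i j : Fin n, π j = π i + 1 ∧ d j < d i :=
  exists_adjacent_descent_general n π d hsum hd
end

section
/- For every permutation π of {1,…,n} there exists d : {1,…,n} → ℤ such that ∑_{i=1}^n d(i) = 0, π(i) + d(i) ≡ i (mod n) for every i, and d(i) − d(j) ≤ n for all i, j ∈ {1,…,n}. -/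
/-!
Take the residues `e i = (i - π i) mod n ∈ [0, n)`. They have the right classes, and their sum
is `n * m` for some `m ≤ n` because the `i - π i` sum to zero. Subtracting `n` from `m` of the
largest residues makes the sum zero, and keeps all pairwise differences at most `n`: two
residues differ by less than `n`, and the only pairs that gain `n` are (unshifted, shifted),
where the unshifted residue is the smaller one.
-/

open Finset

theorem Finset.exists_card_eq_forall_notMem_le_mem {ι α : Type*} [Fintype ι] [LinearOrder α]
    (f : ι → α) {m : ℕ} (hm : m ≤ Fintype.card ι) :
    ∃ S : Finset ι, #S = m ∧ ∀ i ∉ S, ∀ j ∈ S, f i ≤ f j := by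
  classical
  induction m with
  | zero => exact ⟨∅, rfl, by simp⟩
  | succ m ih =>
    obtain ⟨S, hcard, hS⟩ := ih (by omega)
    have hne : Sᶜ.Nonempty := by
      rw [← card_pos, card_compl]
      omega
    obtain ⟨k, hkS, hk⟩ := exists_max_image Sᶜ f hne
    rw [mem_compl] at hkS
    refine ⟨insert k S, by rw [card_insert_of_notMem hkS, hcard], fun i hi j hj => ?_⟩
    rw [mem_insert, not_or] at hi
    obtain rfl | hj := mem_insert.mp hj
    · exact hk i (mem_compl.mpr hi.2)
    · exact hS i hi.2 j hj

theorem exists_sum_emod_eq_mul {ι : Type*} [Fintype ι] {n : ℤ} (hn : 0 < n) (f : ι → ℤ)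
    (hf : n ∣ ∑ i, f i) : ∃ m : ℕ, m ≤ Fintype.card ι ∧ ∑ i, f i % n = n * m := by
  have hdvd : n ∣ ∑ i, f i % n := by
    rw [Int.dvd_iff_emod_eq_zero, ← sum_int_mod]
    exact Int.emod_eq_zero_of_dvd hf
  obtain ⟨k, hk⟩ := hdvd
  have hk_nonneg : 0 ≤ n * k :=
    hk ▸ sum_nonneg fun i _ => Int.emod_nonneg _ hn.ne'
  have hk_le : n * k ≤ n * Fintype.card ι := by
    calc n * k = ∑ i, f i % n := hk.symm
      _ ≤ ∑ _i : ι, n := sum_le_sum fun i _ => (Int.emod_lt_of_pos _ hn).le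
      _ = n * Fintype.card ι := by rw [sum_const, card_univ, nsmul_eq_mul, mul_comm]
  lift k to ℕ using nonneg_of_mul_nonneg_right hk_nonneg hn
  exact ⟨k, by exact_mod_cast le_of_mul_le_mul_left hk_le hn, hk⟩

theorem sub_ite_sub_sub_ite_le {ι : Type*} [DecidableEq ι] (e : ι → ℤ) {n : ℤ}
    (he : ∀ i, 0 ≤ e i ∧ e i < n) (S : Finset ι) (hS : ∀ i ∉ S, ∀ j ∈ S, e i ≤ e j) (i j : ι) :
    (e i - if i ∈ S then n else 0) - (e j - if j ∈ S then n else 0) ≤ n := by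
  obtain ⟨hi_nonneg, hi_lt⟩ := he i
  obtain ⟨hj_nonneg, hj_lt⟩ := he j
  split_ifs with hi hj hj
  · linarith
  · linarith
  · linarith [hS i hi j hj]
  · linarith

theorem exists_modEq_sum_eq_zero_sub_le {ι : Type*} [Fintype ι] {n : ℤ} (hn : 0 < n)
    (f : ι → ℤ) (hf : n ∣ ∑ i, f i) :
    ∃ d : ι → ℤ, ∑ i, d i = 0 ∧ (∀ i, d i ≡ f i [ZMOD n]) ∧ ∀ i j, d i - d j ≤ n := by
  classical
  set e : ι → ℤ := fun i => f i % n
  have he : ∀ i, 0 ≤ e i ∧ e i < n := fun i =>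
    ⟨Int.emod_nonneg _ hn.ne', Int.emod_lt_of_pos _ hn⟩
  obtain ⟨m, hm, hsum⟩ := exists_sum_emod_eq_mul hn f hf
  obtain ⟨S, hcard, hS⟩ := exists_card_eq_forall_notMem_le_mem e hm
  refine ⟨fun i => e i - if i ∈ S then n else 0, ?_, fun i => ?_,
    sub_ite_sub_sub_ite_le e he S hS⟩
  · rw [sum_sub_distrib, hsum, sum_ite_mem, univ_inter, sum_const, hcard, nsmul_eq_mul, mul_comm,
      sub_self]
  · dsimp only
    split_ifs <;> simp [Int.ModEq, e]

/-- For every permutation `π` of `{1,…,n}` there is a feasible displacement vector `d`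
with `d(i) - d(j) ≤ n` for all `i, j`. -/
theorem exists_feasible_bounded_disp (n : ℕ) (π : Equiv.Perm (Fin n)) :
    ∃ d : Fin n → ℤ, ∑ i, d i = 0 ∧
      (∀ i : Fin n, ((π i : ℕ) : ℤ) + d i ≡ ((i : ℕ) : ℤ) [ZMOD (n : ℤ)]) ∧
      ∀ i j : Fin n, d i - d j ≤ (n : ℤ) := by
  rcases n.eq_zero_or_pos with rfl | hn
  · exact ⟨0, by simp, finZeroElim, finZeroElim⟩
  have hsum : ∑ i : Fin n, (((i : ℕ) : ℤ) - ((π i : ℕ) : ℤ)) = 0 := by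
    rw [sum_sub_distrib, Equiv.sum_comp π fun i : Fin n => ((i : ℕ) : ℤ), sub_self]
  obtain ⟨d, hd_sum, hd_modEq, hd_le⟩ :=
    exists_modEq_sum_eq_zero_sub_le (n := n) (by exact_mod_cast hn) _ (hsum ▸ dvd_zero _)
  refine ⟨d, hd_sum, fun i => ?_, hd_le⟩
  simpa using (hd_modEq i).add_left ((π i : ℕ) : ℤ)
end

section
/- Let d : {1,…,n} → ℤ satisfy ∑_{i=1}^n d(i) = 0 and d(i) − d(j) ≤ n for all i, j ∈ {1,…,n}. Then (1/2)·∑_{i=1}^n |d(i)| ≤ n²/4. -/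
/-!
Let `P` be the sum of the nonnegative entries of `d`; since `d` sums to zero, `∑ |d i| = 2 P`.
Summing `d i - d j ≤ n` over the pairs with `d i ≥ 0 > d j` gives `n P ≤ s t n`, where `s + t = n`
count the two kinds of entries, so `P ≤ s t ≤ n² / 4`.
-/

open Finset

section

variable {ι K : Type*} [Fintype ι] [Field K] [LinearOrder K] [IsStrictOrderedRing K]
  {f : ι → K}

theorem card_mul_sum_eq_sum_sum_compl_sub [DecidableEq ι] (hsum : ∑ i, f i = 0) (s : Finset ι) :
    (Fintype.card ι : K) * ∑ i ∈ s, f i = ∑ i ∈ s, ∑ j ∈ sᶜ, (f i - f j) := by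
  have hcompl : ∑ j ∈ sᶜ, f j = -∑ i ∈ s, f i := by
    rw [eq_neg_iff_add_eq_zero, add_comm, sum_add_sum_compl, hsum]
  have hcard : (#s + #sᶜ : K) = Fintype.card ι := by exact_mod_cast card_add_card_compl s
  simp only [sum_sub_distrib, sum_const, nsmul_eq_mul, ← mul_sum, hcompl, ← hcard]
  ring

theorem sum_le_card_mul_div_four_of_sub_le [DecidableEq ι] (hsum : ∑ i, f i = 0) {c : K}
    (hc : ∀ i j, f i - f j ≤ c) (s : Finset ι) :
    ∑ i ∈ s, f i ≤ Fintype.card ι * c / 4 := by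
  rcases isEmpty_or_nonempty ι with _ | ⟨⟨i₀⟩⟩
  · simp [eq_empty_of_isEmpty s]
  have hc₀ : 0 ≤ c := by simpa using hc i₀ i₀
  have hn : (0 : K) < Fintype.card ι := by exact_mod_cast Fintype.card_pos_iff.2 ⟨i₀⟩
  have hcard : (#s + #sᶜ : K) = Fintype.card ι := by exact_mod_cast card_add_card_compl s
  have hpairs : (Fintype.card ι : K) * ∑ i ∈ s, f i ≤ #s * #sᶜ * c := by
    calc (Fintype.card ι : K) * ∑ i ∈ s, f i = ∑ i ∈ s, ∑ j ∈ sᶜ, (f i - f j) :=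
          card_mul_sum_eq_sum_sum_compl_sub hsum s
      _ ≤ ∑ i ∈ s, ∑ j ∈ sᶜ, c := sum_le_sum fun i _ ↦ sum_le_sum fun j _ ↦ hc i j
      _ = #s * #sᶜ * c := by simp only [sum_const, nsmul_eq_mul, mul_assoc]
  have hamgm : 4 * (#s * #sᶜ : K) ≤ Fintype.card ι ^ 2 := by
    rw [← hcard, ← mul_assoc]; exact four_mul_le_sq_add _ _
  rw [le_div_iff₀ (by norm_num : (0 : K) < 4)]
  refine le_of_mul_le_mul_left ?_ hn
  linarith [mul_le_mul_of_nonneg_right hamgm hc₀]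

theorem sum_abs_eq_two_mul_sum_filter_nonneg (hsum : ∑ i, f i = 0) :
    ∑ i, |f i| = 2 * ∑ i with 0 ≤ f i, f i := by
  rw [← sum_filter_add_sum_filter_not univ (fun i ↦ 0 ≤ f i)] at hsum ⊢
  have hpos : ∑ i with 0 ≤ f i, |f i| = ∑ i with 0 ≤ f i, f i :=
    sum_congr rfl fun i hi ↦ abs_of_nonneg (mem_filter.1 hi).2
  have hneg : ∑ i with ¬0 ≤ f i, |f i| = -∑ i with ¬0 ≤ f i, f i := by
    rw [← sum_neg_distrib]
    exact sum_congr rfl fun i hi ↦ abs_of_neg (not_le.1 (mem_filter.1 hi).2)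
  rw [hpos, hneg]
  linarith

theorem sum_abs_le_card_mul_div_two_of_sub_le (hsum : ∑ i, f i = 0) {c : K}
    (hc : ∀ i j, f i - f j ≤ c) :
    ∑ i, |f i| ≤ Fintype.card ι * c / 2 := by
  classical
  have := sum_le_card_mul_div_four_of_sub_le hsum hc {i | 0 ≤ f i}
  rw [sum_abs_eq_two_mul_sum_filter_nonneg hsum]
  linarith

end

/-- If `d` sums to zero and `d(i) - d(j) ≤ n` for all `i, j`, then
`(1/2)·∑ᵢ |d(i)| ≤ n²/4`. -/
theorem half_sum_abs_le (n : ℕ) (d : Fin n → ℤ) (hsum : ∑ i, d i = 0)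
    (hopt : ∀ i j : Fin n, d i - d j ≤ (n : ℤ)) :
    (1 / 2 : ℚ) * ∑ i, (|d i| : ℚ) ≤ (n : ℚ) ^ 2 / 4 := by
  have hsumℚ : ∑ i, (d i : ℚ) = 0 := by exact_mod_cast hsum
  have hoptℚ : ∀ i j, (d i : ℚ) - d j ≤ n := fun i j ↦ by exact_mod_cast hopt i j
  have := sum_abs_le_card_mul_div_two_of_sub_le hsumℚ hoptℚ
  rw [Fintype.card_fin] at this
  linarith
end
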